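/- Let X be a metric space, μ a finite Borel measure, and (h_s) a continuous measure-preserving flow on X. Suppose that for every bounded uniformly continuous f: X → ℝ and every x ∈ X there exists a sequence R_n → ∞ with (1/R_n)∫₀^{R_n} f(h_s(x)) ds → ∫ f dμ / μ(X). Then every ergodic h_s-invariant Borel probability measure ν on X equals μ/μ(X). -/

import Mathlib

/-!
Fix an `h`-invariant probability measure `ν`, a bounded uniformly continuous `f` and
`c = ∫ f dμ / μ(X)`. For `b > c` the hypothesis gives every point `x` an integer time `n` with
`∫₀ⁿ (b - f (h s x)) ds > 0`. These integrals are the Birkhoff sums, under the time-one map, of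
`x ↦ ∫₀¹ (b - f (h s x)) ds`, whose `ν`-integral is `∫ (b - f) dν` by Fubini. The maximal ergodic
theorem then gives `∫ (b - f) dν ≥ 0`, so `∫ f dν ≤ c`; applied to `-f` this is an equality, and
bounded uniformly continuous functions determine a finite Borel measure on a metric space.
-/

open MeasureTheory Filter Topology intervalIntegral

theorem MeasureTheory.MeasurePreserving.integral_comp_of_aestronglyMeasurable
    {α β E : Type*} [MeasurableSpace α] [MeasurableSpace β] [NormedAddCommGroup E]
    [NormedSpace ℝ E] {μ : Measure α} {ν : Measure β} {T : α → β}
    (hT : MeasurePreserving T μ ν) {g : β → E} (hg : AEStronglyMeasurable g ν) :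
    ∫ x, g (T x) ∂μ = ∫ y, g y ∂ν := by
  rw [← integral_map hT.aemeasurable (hT.map_eq ▸ hg), hT.map_eq]

section MaximalErgodic

open Finset

variable {α : Type*} {T : α → α} {G : α → ℝ}

noncomputable def birkhoffMax (T : α → α) (G : α → ℝ) (N : ℕ) : α → ℝ :=
  (range (N + 1)).sup' nonempty_range_add_one fun n ↦ birkhoffSum T G n

theorem birkhoffSum_le_birkhoffMax {n N : ℕ} (hn : n ≤ N) (x : α) :
    birkhoffSum T G n x ≤ birkhoffMax T G N x := by
  rw [birkhoffMax, Finset.sup'_apply]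
  exact le_sup' (fun n ↦ birkhoffSum T G n x) (mem_range_succ_iff.mpr hn)

theorem birkhoffMax_nonneg (N : ℕ) (x : α) : 0 ≤ birkhoffMax T G N x :=
  birkhoffSum_zero T G x ▸ birkhoffSum_le_birkhoffMax N.zero_le x

theorem monotone_birkhoffMax (x : α) : Monotone fun N ↦ birkhoffMax T G N x := by
  intro N M hNM
  dsimp only
  rw [birkhoffMax, Finset.sup'_apply]
  exact sup'_le _ _ fun n hn ↦
    birkhoffSum_le_birkhoffMax ((mem_range_succ_iff.mp hn).trans hNM) x

theorem birkhoffMax_le_add_birkhoffMax_apply {N : ℕ} {x : α} (hx : 0 < birkhoffMax T G N x) :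
    birkhoffMax T G N x ≤ G x + birkhoffMax T G N (T x) := by
  obtain ⟨n, hn, hmax⟩ := exists_mem_eq_sup' nonempty_range_add_one fun n ↦ birkhoffSum T G n x
  rw [← Finset.sup'_apply, ← birkhoffMax] at hmax
  rw [hmax] at hx ⊢
  cases n with
  | zero => exact absurd hx (by simp [birkhoffSum_zero])
  | succ m =>
    rw [birkhoffSum_succ']
    exact add_le_add_right (birkhoffSum_le_birkhoffMax (by simpa using hn : m < N).le _) _

variable [MeasurableSpace α] {μ : Measure α}

theorem measurable_birkhoffMax (hT : Measurable T) (hG : Measurable G) (N : ℕ) :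
    Measurable (birkhoffMax T G N) :=
  measurable_sup' _ fun _ _ ↦
    measurable_sum _ fun k _ ↦ hG.comp (hT.iterate k)

theorem integrable_birkhoffMax (hT : MeasurePreserving T μ μ) (hG : Integrable G μ) (N : ℕ) :
    Integrable (birkhoffMax T G N) μ :=
  sup'_induction _ (fun n ↦ birkhoffSum T G n) (p := fun f ↦ Integrable f μ)
    (fun _ h₁ _ h₂ ↦ h₁.sup h₂) fun _ _ ↦
      integrable_finsetSum _ fun k _ ↦ (hT.iterate k).integrable_comp_of_integrable hG

/-- The **maximal ergodic theorem**, in Garsia's form. -/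
theorem setIntegral_birkhoffMax_pos_nonneg (hT : MeasurePreserving T μ μ) (hGm : Measurable G)
    (hG : Integrable G μ) (N : ℕ) :
    0 ≤ ∫ x in {x | 0 < birkhoffMax T G N x}, G x ∂μ := by
  set M := birkhoffMax T G N
  set E := {x | 0 < M x}
  have hMm : Measurable M := measurable_birkhoffMax hT.measurable hGm N
  have hM : Integrable M μ := integrable_birkhoffMax hT hG N
  have hMT : Integrable (fun x ↦ M (T x)) μ := hT.integrable_comp_of_integrable hM
  have hE : MeasurableSet E := measurableSet_lt measurable_const hMm
  calc 0 = ∫ x, M x ∂μ - ∫ x, M (T x) ∂μ := by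
        rw [hT.integral_comp_of_aestronglyMeasurable hMm.aestronglyMeasurable, sub_self]
    _ ≤ ∫ x in E, M x ∂μ - ∫ x in E, M (T x) ∂μ := by
        refine sub_le_sub (setIntegral_eq_integral_of_forall_compl_eq_zero fun x hx ↦ ?_).ge
          (setIntegral_le_integral hMT (ae_of_all _ fun x ↦ birkhoffMax_nonneg N (T x)))
        exact le_antisymm (not_lt.mp hx) (birkhoffMax_nonneg N x)
    _ = ∫ x in E, (M x - M (T x)) ∂μ := (integral_sub hM.integrableOn hMT.integrableOn).symm
    _ ≤ ∫ x in E, G x ∂μ :=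
        setIntegral_mono_on (hM.sub hMT).integrableOn hG.integrableOn hE fun x hx ↦
          sub_le_iff_le_add.mpr (birkhoffMax_le_add_birkhoffMax_apply hx)

theorem integral_nonneg_of_forall_exists_birkhoffSum_pos (hT : MeasurePreserving T μ μ)
    (hGm : Measurable G) (hG : Integrable G μ) (hpos : ∀ x, ∃ n, 0 < birkhoffSum T G n x) :
    0 ≤ ∫ x, G x ∂μ := by
  set E : ℕ → Set α := fun N ↦ {x | 0 < birkhoffMax T G N x}
  have hE : ∀ N, MeasurableSet (E N) := fun N ↦
    measurableSet_lt measurable_const (measurable_birkhoffMax hT.measurable hGm N)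
  have hE_mono : Monotone E := fun N M hNM x hx ↦ hx.trans_le (monotone_birkhoffMax x hNM)
  have hE_univ : ⋃ N, E N = Set.univ := Set.eq_univ_of_forall fun x ↦
    let ⟨n, hn⟩ := hpos x
    Set.mem_iUnion.mpr ⟨n, hn.trans_le (birkhoffSum_le_birkhoffMax le_rfl x)⟩
  have hlim := tendsto_setIntegral_of_monotone hE hE_mono hG.integrableOn
  rw [hE_univ, Measure.restrict_univ] at hlim
  exact ge_of_tendsto' hlim (setIntegral_birkhoffMax_pos_nonneg hT hGm hG)

end MaximalErgodic

theorem exists_nat_intervalIntegral_pos {ψ : ℝ → ℝ} (hψ : Continuous ψ) {C r : ℝ}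
    (hC : ∀ s, |ψ s| ≤ C) (hr : 0 ≤ r) (hlt : C < ∫ s in (0 : ℝ)..r, ψ s) :
    ∃ n : ℕ, 0 < ∫ s in (0 : ℝ)..n, ψ s := by
  refine ⟨⌈r⌉₊, ?_⟩
  have htail : |∫ s in r..⌈r⌉₊, ψ s| ≤ C := by
    have hlen : |(⌈r⌉₊ : ℝ) - r| ≤ 1 := by
      rw [abs_of_nonneg (sub_nonneg.mpr (Nat.le_ceil r))]
      linarith [Nat.ceil_lt_add_one hr]
    calc _ ≤ C * |(⌈r⌉₊ : ℝ) - r| :=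
          norm_integral_le_of_norm_le_const fun s _ ↦ (Real.norm_eq_abs _).trans_le (hC s)
      _ ≤ C := mul_le_of_le_one_right ((abs_nonneg _).trans (hC 0)) hlen
  rw [← integral_add_adjacent_intervals (hψ.intervalIntegrable 0 r) (hψ.intervalIntegrable r _)]
  linarith [neg_abs_le (∫ s in r..⌈r⌉₊, ψ s)]

theorem exists_nat_intervalIntegral_const_sub_pos {φ : ℝ → ℝ} (hφ : Continuous φ) {C : ℝ}
    (hC : ∀ s, |φ s| ≤ C) {R : ℕ → ℝ} (hR : Tendsto R atTop atTop) {c b : ℝ}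
    (hlim : Tendsto (fun k ↦ 1 / R k * ∫ s in (0 : ℝ)..R k, φ s) atTop (𝓝 c)) (hcb : c < b) :
    ∃ n : ℕ, 0 < ∫ s in (0 : ℝ)..n, (b - φ s) := by
  have hbig : Tendsto (fun k ↦ R k * (b - 1 / R k * ∫ s in (0 : ℝ)..R k, φ s)) atTop atTop :=
    hR.atTop_mul_pos (sub_pos.mpr hcb) (tendsto_const_nhds.sub hlim)
  obtain ⟨k, hk, hRk⟩ :=
    ((hbig.eventually_gt_atTop (|b| + C)).and (hR.eventually_gt_atTop 0)).exists
  refine exists_nat_intervalIntegral_pos (continuous_const.sub hφ)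
    (fun s ↦ (abs_sub _ _).trans (add_le_add_right (hC s) _)) hRk.le ?_
  rw [integral_sub intervalIntegrable_const (hφ.intervalIntegrable _ _),
    intervalIntegral.integral_const]
  calc |b| + C < R k * (b - 1 / R k * ∫ s in (0 : ℝ)..R k, φ s) := hk
    _ = (R k - 0) • b - ∫ s in (0 : ℝ)..R k, φ s := by
      rw [sub_zero, smul_eq_mul, mul_sub, ← mul_assoc, mul_one_div_cancel hRk.ne', one_mul,
        mul_comm]

section Flow

variable {X : Type*} {h : ℝ → X → X} {g : X → ℝ}

theorem comp_iterate_eq_of_add (hadd : ∀ s t, h (s + t) = h s ∘ h t) (s : ℝ) (k : ℕ) :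
    h s ∘ (h 1)^[k] = h (s + k) := by
  induction k with
  | zero => simp
  | succ k ih =>
    rw [Function.iterate_succ, ← Function.comp_assoc, ih, ← hadd]
    push_cast
    ring_nf

noncomputable def flowUnitIntegral (h : ℝ → X → X) (g : X → ℝ) (x : X) : ℝ :=
  ∫ s in (0 : ℝ)..1, g (h s x)

theorem birkhoffSum_flowUnitIntegral (hadd : ∀ s t, h (s + t) = h s ∘ h t)
    (horb : ∀ x, Continuous fun s ↦ g (h s x)) (n : ℕ) (x : X) :
    birkhoffSum (h 1) (flowUnitIntegral h g) n x = ∫ s in (0 : ℝ)..n, g (h s x) := by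
  induction n with
  | zero => simp [birkhoffSum_zero]
  | succ n ih =>
    have hshift : flowUnitIntegral h g ((h 1)^[n] x) = ∫ s in (n : ℝ)..n + 1, g (h s x) := by
      simp_rw [flowUnitIntegral, ← Function.comp_apply (f := h _), comp_iterate_eq_of_add hadd]
      simpa [add_comm] using integral_comp_add_right (fun s ↦ g (h s x)) (n : ℝ) (a := 0) (b := 1)
    rw [birkhoffSum_succ, ih, hshift, integral_add_adjacent_intervals
      ((horb x).intervalIntegrable _ _) ((horb x).intervalIntegrable _ _)]
    push_cast
    rfl

theorem abs_flowUnitIntegral_le {C : ℝ} (hgC : ∀ x, |g x| ≤ C) (x : X) :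
    |flowUnitIntegral h g x| ≤ C := by
  simpa [flowUnitIntegral] using norm_integral_le_of_norm_le_const (a := 0) (b := 1)
    (f := fun s ↦ g (h s x)) fun s _ ↦ (Real.norm_eq_abs _).trans_le (hgC (h s x))

variable [TopologicalSpace X]

theorem continuous_flowUnitIntegral (hcont : Continuous fun p : ℝ × X ↦ h p.1 p.2)
    (hg : Continuous g) : Continuous (flowUnitIntegral h g) :=
  continuous_parametric_intervalIntegral_of_continuous' (f := fun x s ↦ g (h s x))
    (hg.comp (hcont.comp continuous_swap)) 0 1

variable [MeasurableSpace X] [OpensMeasurableSpace X] {ν : Measure X} [IsFiniteMeasure ν]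

theorem integral_flowUnitIntegral (hcont : Continuous fun p : ℝ × X ↦ h p.1 p.2)
    (hg : Continuous g) (hν : ∀ s, MeasurePreserving (h s) ν ν) {C : ℝ}
    (hgC : ∀ x, |g x| ≤ C) :
    ∫ x, flowUnitIntegral h g x ∂ν = ∫ x, g x ∂ν := by
  have : IsFiniteMeasure (volume.restrict (Set.uIoc (0 : ℝ) 1)) :=
    isFiniteMeasure_restrict.mpr (by simp)
  have hint : Integrable (fun p : ℝ × X ↦ g (h p.1 p.2))
      ((volume.restrict (Set.uIoc 0 1)).prod ν) :=
    .of_bound (hg.comp hcont).aestronglyMeasurable C (ae_of_all _ fun p ↦ hgC _)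
  unfold flowUnitIntegral
  rw [← intervalIntegral_integral_swap hint]
  simp_rw [fun s ↦ (hν s).integral_comp_of_aestronglyMeasurable hg.aestronglyMeasurable]
  simp

theorem integral_nonneg_of_forall_exists_integral_orbit_pos
    (hcont : Continuous fun p : ℝ × X ↦ h p.1 p.2) (hg : Continuous g)
    (hadd : ∀ s t, h (s + t) = h s ∘ h t) (hν : ∀ s, MeasurePreserving (h s) ν ν) {C : ℝ}
    (hgC : ∀ x, |g x| ≤ C) (hpos : ∀ x, ∃ n : ℕ, 0 < ∫ s in (0 : ℝ)..n, g (h s x)) :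
    0 ≤ ∫ x, g x ∂ν := by
  have horb : ∀ x, Continuous fun s ↦ g (h s x) := fun x ↦
    hg.comp (hcont.comp (continuous_id.prodMk continuous_const))
  have hG := continuous_flowUnitIntegral hcont hg
  rw [← integral_flowUnitIntegral hcont hg hν hgC]
  refine integral_nonneg_of_forall_exists_birkhoffSum_pos (hν 1) hG.measurable
    (.of_bound hG.aestronglyMeasurable C (ae_of_all _ (abs_flowUnitIntegral_le hgC))) fun x ↦ ?_
  simpa only [birkhoffSum_flowUnitIntegral hadd horb] using hpos x

end Flow

theorem integral_le_of_forall_exists_tendsto_orbit_average {X : Type*} [TopologicalSpace X]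
    [MeasurableSpace X] [OpensMeasurableSpace X] {h : ℝ → X → X} {ν : Measure X}
    [IsProbabilityMeasure ν] (hcont : Continuous fun p : ℝ × X ↦ h p.1 p.2)
    (hadd : ∀ s t, h (s + t) = h s ∘ h t)
    (hν : ∀ s, MeasurePreserving (h s) ν ν) {f : X → ℝ} (hf : Continuous f) {C : ℝ}
    (hfC : ∀ x, |f x| ≤ C) {c : ℝ}
    (havg : ∀ x, ∃ R : ℕ → ℝ, Tendsto R atTop atTop ∧
      Tendsto (fun n ↦ 1 / R n * ∫ s in (0 : ℝ)..R n, f (h s x)) atTop (𝓝 c)) :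
    ∫ x, f x ∂ν ≤ c := by
  refine le_of_forall_gt_imp_ge_of_dense fun b hcb ↦ ?_
  have hpos : ∀ x, ∃ n : ℕ, 0 < ∫ s in (0 : ℝ)..n, (b - f (h s x)) := fun x ↦
    let ⟨_, hR, hlim⟩ := havg x
    exists_nat_intervalIntegral_const_sub_pos
      (hf.comp (hcont.comp (continuous_id.prodMk continuous_const))) (fun s ↦ hfC _) hR hlim hcb
  have hbf := integral_nonneg_of_forall_exists_integral_orbit_pos (g := fun x ↦ b - f x) hcont
    (continuous_const.sub hf) hadd hν
    (fun x ↦ (abs_sub _ _).trans (add_le_add_right (hfC x) _)) hpos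
  rw [integral_sub (integrable_const b) (.of_bound hf.aestronglyMeasurable C (ae_of_all _ hfC)),
    MeasureTheory.integral_const] at hbf
  simpa using hbf

theorem MeasureTheory.ext_of_forall_integral_uniformContinuous_eq {Ω : Type*}
    [PseudoMetricSpace Ω] [MeasurableSpace Ω] [BorelSpace Ω] {μ ν : Measure Ω}
    [IsFiniteMeasure μ] [IsFiniteMeasure ν]
    (h : ∀ f : Ω → ℝ, UniformContinuous f → (∃ C, ∀ x, |f x| ≤ C) →
      ∫ x, f x ∂μ = ∫ x, f x ∂ν) :
    μ = ν := by
  have hclosed : ∀ F, IsClosed F → μ F = ν F := by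
    intro F hF
    have hδ : ∀ n : ℕ, 0 < 1 / ((n : ℝ) + 1) := fun _ ↦ Nat.one_div_pos_of_nat
    have hμ := tendsto_integral_thickenedIndicator_of_isClosed μ hF hδ
      tendsto_one_div_add_atTop_nhds_zero_nat
    have hν := tendsto_integral_thickenedIndicator_of_isClosed ν hF hδ
      tendsto_one_div_add_atTop_nhds_zero_nat
    have heq : ∀ n, ∫ x, (thickenedIndicator (hδ n) F x : ℝ) ∂μ
        = ∫ x, (thickenedIndicator (hδ n) F x : ℝ) ∂ν := fun n ↦
      h _ (uniformContinuous_subtype_val.comp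
        (lipschitzWith_thickenedIndicator _ F).uniformContinuous)
        ⟨1, fun x ↦ by
          rw [abs_of_nonneg (by positivity)]
          exact_mod_cast thickenedIndicator_le_one (hδ n) F x⟩
    simp_rw [heq] at hμ
    exact (ENNReal.toReal_eq_toReal_iff' (measure_ne_top _ _) (measure_ne_top _ _)).mp
      (tendsto_nhds_unique hμ hν)
  exact ext_of_generate_finite _ (BorelSpace.measurable_eq.trans borel_eq_generateFrom_isClosed)
    isPiSystem_isClosed (fun F hF ↦ hclosed F hF) (hclosed _ isClosed_univ)

theorem stmt_15_general {X : Type*} [MetricSpace X] [MeasurableSpace X] [BorelSpace X]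
    (μ : Measure X) [IsFiniteMeasure μ] (hμpos : μ Set.univ ≠ 0)
    (h : ℝ → X → X) (hcont : Continuous fun p : ℝ × X => h p.1 p.2)
    (hhadd : ∀ s₁ s₂, h (s₁ + s₂) = h s₁ ∘ h s₂)
    (hequi : ∀ f : X → ℝ, UniformContinuous f → (∃ C, ∀ x, |f x| ≤ C) →
      ∀ x : X, ∃ R : ℕ → ℝ, Tendsto R atTop atTop ∧
        Tendsto (fun n => (1 / R n) * ∫ s in (0:ℝ)..(R n), f (h s x)) atTop
          (𝓝 ((∫ y, f y ∂μ) / (μ Set.univ).toReal))) :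
    ∀ ν : Measure X, IsProbabilityMeasure ν →
      (∀ s, MeasurePreserving (h s) ν ν) →
      (∀ A : Set X, MeasurableSet A → (∀ s, h s ⁻¹' A = A) → ν A = 0 ∨ ν A = 1) →
      ν = (μ Set.univ)⁻¹ • μ := by
  intro ν _ hν _
  have : NeZero μ := ⟨fun hμ ↦ hμpos (by simp [hμ])⟩
  have hle : ∀ f : X → ℝ, UniformContinuous f → (∃ C, ∀ x, |f x| ≤ C) →
      ∫ x, f x ∂ν ≤ ∫ x, f x ∂((μ Set.univ)⁻¹ • μ) := by
    rintro f hf ⟨C, hC⟩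
    rw [MeasureTheory.integral_smul_measure, ENNReal.toReal_inv, smul_eq_mul, inv_mul_eq_div]
    exact integral_le_of_forall_exists_tendsto_orbit_average hcont hhadd hν hf.continuous hC
      (hequi f hf ⟨C, hC⟩)
  refine ext_of_forall_integral_uniformContinuous_eq fun f hf ⟨C, hC⟩ ↦
    le_antisymm (hle f hf ⟨C, hC⟩) ?_
  simpa [MeasureTheory.integral_neg] using hle (-f) hf.neg ⟨C, fun x ↦ by simpa using hC x⟩

/-- Unique ergodicity from equidistribution along subsequences of Birkhoff averages. -/
theorem stmt_15 {X : Type*} [MetricSpace X] [MeasurableSpace X] [BorelSpace X]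
    (μ : Measure X) [IsFiniteMeasure μ] (hμpos : μ Set.univ ≠ 0)
    (h : ℝ → X → X) (hcont : Continuous fun p : ℝ × X => h p.1 p.2)
    (hh0 : h 0 = id) (hhadd : ∀ s₁ s₂, h (s₁ + s₂) = h s₁ ∘ h s₂)
    (hmp : ∀ s, MeasurePreserving (h s) μ μ)
    (hequi : ∀ f : X → ℝ, UniformContinuous f → (∃ C, ∀ x, |f x| ≤ C) →
      ∀ x : X, ∃ R : ℕ → ℝ, Tendsto R atTop atTop ∧
        Tendsto (fun n => (1 / R n) * ∫ s in (0:ℝ)..(R n), f (h s x)) atTop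
          (𝓝 ((∫ y, f y ∂μ) / (μ Set.univ).toReal))) :
    ∀ ν : Measure X, IsProbabilityMeasure ν →
      (∀ s, MeasurePreserving (h s) ν ν) →
      (∀ A : Set X, MeasurableSet A → (∀ s, h s ⁻¹' A = A) → ν A = 0 ∨ ν A = 1) →
      ν = (μ Set.univ)⁻¹ • μ :=
  stmt_15_general μ hμpos h hcont hhadd hequi
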